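/- Let P ⊆ R^n_{≥0} be a convex set of feasible utility vectors and let u* ∈ P maximize Σ_i ln(U_i) over P, with u*_i > 0 for all i. Then u* is a core outcome: there is no subset S ⊆ [n] and vector d ∈ P such that (|S|/n)·d_i ≥ u*_i for all i ∈ S with at least one strict inequality. -/

import Mathlib

/-!
At a maximiser `u` of `∑ i, log U_i` over a convex set `P`, the derivative of the objective
in the feasible direction `d - u` is nonpositive, which reads `∑ i, d_i / u_i ≤ n` for every
`d ∈ P`.
A blocking coalition `S` would instead have `d_i / u_i ≥ n / |S|` on `S`, strictly somewhere, so
already the terms indexed by `S` sum to more than `n`.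
-/

open Finset Real

theorem hasFDerivAt_sum_log {ι : Type*} [Fintype ι] {u : ι → ℝ} (hu : ∀ i, u i ≠ 0) :
    HasFDerivAt (fun U : ι → ℝ => ∑ i, log (U i))
      (∑ i, (u i)⁻¹ • ContinuousLinearMap.proj (R := ℝ) (φ := fun _ : ι => ℝ) i) u :=
  HasFDerivAt.fun_sum fun i _ => (hasFDerivAt_apply i u).log (hu i)

theorem sum_sub_div_nonpos_of_isMaxOn_sum_log {ι : Type*} [Fintype ι] {P : Set (ι → ℝ)}
    (hP : Convex ℝ P) {u d : ι → ℝ} (hu : u ∈ P) (hd : d ∈ P) (hpos : ∀ i, 0 < u i)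
    (hmax : IsMaxOn (fun U : ι → ℝ => ∑ i, log (U i)) P u) :
    ∑ i, (d i - u i) / u i ≤ 0 := by
  have := hmax.localize.hasFDerivWithinAt_nonpos
    (hasFDerivAt_sum_log fun i => (hpos i).ne').hasFDerivWithinAt
    (sub_mem_posTangentConeAt_of_segment_subset (hP.segment_subset hu hd))
  simpa [div_eq_inv_mul] using this

theorem sum_div_le_card_of_isMaxOn_sum_log {ι : Type*} [Fintype ι] {P : Set (ι → ℝ)}
    (hP : Convex ℝ P) {u d : ι → ℝ} (hu : u ∈ P) (hd : d ∈ P) (hpos : ∀ i, 0 < u i)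
    (hmax : IsMaxOn (fun U : ι → ℝ => ∑ i, log (U i)) P u) :
    ∑ i, d i / u i ≤ Fintype.card ι := by
  have h := sum_sub_div_nonpos_of_isMaxOn_sum_log hP hu hd hpos hmax
  simp only [sub_div, sum_sub_distrib, div_self (hpos _).ne', sum_const, card_univ,
    nsmul_eq_mul, mul_one] at h
  linarith

theorem lt_sum_div_of_le_card_div_mul {ι : Type*} {S : Finset ι} {u d : ι → ℝ} {r : ℝ}
    (hr : 0 < r) (hpos : ∀ i, 0 < u i)
    (hle : ∀ i ∈ S, u i ≤ (#S / r) * d i) (hlt : ∃ i ∈ S, u i < (#S / r) * d i) :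
    r < ∑ i ∈ S, d i / u i := by
  obtain ⟨i₀, hi₀, hi₀_lt⟩ := hlt
  have hS : (0 : ℝ) < #S := by exact_mod_cast card_pos.mpr ⟨i₀, hi₀⟩
  have hle_iff : ∀ i, u i ≤ (#S / r) * d i ↔ r / #S ≤ d i / u i := fun i => by
    rw [div_le_div_iff₀ hS (hpos i), div_mul_eq_mul_div, le_div_iff₀ hr,
      mul_comm (u i), mul_comm (d i)]
  have hlt_iff : ∀ i, u i < (#S / r) * d i ↔ r / #S < d i / u i := fun i => by
    rw [div_lt_div_iff₀ hS (hpos i), div_mul_eq_mul_div, lt_div_iff₀ hr,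
      mul_comm (u i), mul_comm (d i)]
  calc r = ∑ _i ∈ S, r / #S := by rw [sum_const, nsmul_eq_mul, mul_div_cancel₀ _ hS.ne']
    _ < ∑ i ∈ S, d i / u i :=
      sum_lt_sum (fun i hi => (hle_iff i).1 (hle i hi))
        ⟨i₀, hi₀, (hlt_iff i₀).1 hi₀_lt⟩

/-- The fractional Max Nash Welfare solution lies in the core: if `u*` maximizes
`∑ i, log U_i` over a convex set `P` of nonnegative utility vectors with
`u*_i > 0` for all `i`, then no coalition `S` and `d ∈ P` satisfy
`(|S|/n)·d_i ≥ u*_i` for all `i ∈ S` with one strict inequality. -/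
theorem mnw_in_core
    {n : ℕ} (P : Set (Fin n → ℝ)) (hconv : Convex ℝ P)
    (hnonneg : ∀ U ∈ P, ∀ i, 0 ≤ U i)
    (ustar : Fin n → ℝ) (hmem : ustar ∈ P) (hpos : ∀ i, 0 < ustar i)
    (hmax : ∀ U ∈ P, ∑ i, Real.log (U i) ≤ ∑ i, Real.log (ustar i)) :
    ¬ ∃ (S : Finset (Fin n)) (d : Fin n → ℝ), d ∈ P ∧
        (∀ i ∈ S, ((S.card : ℝ) / n) * d i ≥ ustar i) ∧
        (∃ i ∈ S, ((S.card : ℝ) / n) * d i > ustar i) := by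
  rintro ⟨S, d, hd, hle, hlt⟩
  have hn : (0 : ℝ) < n := by
    obtain ⟨i, -⟩ := hlt
    exact_mod_cast i.pos
  have hblock : n < ∑ i ∈ S, d i / ustar i := lt_sum_div_of_le_card_div_mul hn hpos hle hlt
  have hsub : ∑ i ∈ S, d i / ustar i ≤ ∑ i, d i / ustar i :=
    sum_le_sum_of_subset_of_nonneg (subset_univ S)
      fun i _ _ => div_nonneg (hnonneg d hd i) (hpos i).le
  have hall := sum_div_le_card_of_isMaxOn_sum_log hconv hmem hd hpos (isMaxOn_iff.2 hmax)
  rw [Fintype.card_fin] at hall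
  linarith
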